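/- Assume the alternating-minimization framework. Suppose that either F and G are θ-separable for some θ ∈ [0,1), or at least one of L_f, L_g is γ-strongly convex for some γ > 0. Let (f̂, ĝ) be a joint minimizer and let (f_m, g_m), m ≥ 1, be alternating-minimization iterates. Then ‖f_m − f̂‖ + ‖g_m − ĝ‖ → 0, L_f(f_m) → L_f(f̂), and L_g(g_m) → L_g(ĝ) as m → ∞. (Paper's Corollary 3.) -/

import Mathlib

open RealInnerProductSpace Filter

lemma norm_combo {H : Type*} [NormedAddCommGroup H] [InnerProductSpace ℝ H]
    (a b : ℝ) (h : a + b = 1) (u v : H) :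
    ‖a • u + b • v‖ ^ 2 = a * ‖u‖ ^ 2 + b * ‖v‖ ^ 2 - a * b * ‖u - v‖ ^ 2 := by
  have h1 : ‖a • u + b • v‖ ^ 2
      = a ^ 2 * ‖u‖ ^ 2 + 2 * (a * (b * ⟪u, v⟫)) + b ^ 2 * ‖v‖ ^ 2 := by
    rw [norm_add_sq_real, real_inner_smul_left, real_inner_smul_right, norm_smul, norm_smul]
    simp [mul_pow, sq_abs]
  rw [h1, norm_sub_sq_real]
  linear_combination (a * ‖u‖ ^ 2 + b * ‖v‖ ^ 2) * h

lemma cross_id {H : Type*} [NormedAddCommGroup H] [InnerProductSpace ℝ H]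
    (w1 w2 u us : H) :
    ‖w1 - us‖ ^ 2 - ‖w1 - u‖ ^ 2 + (‖w2 - u‖ ^ 2 - ‖w2 - us‖ ^ 2)
      = 2 * ⟪w2 - w1, us - u⟫ := by
  simp only [norm_sub_sq_real, inner_sub_left, inner_sub_right]
  ring

lemma strong_min {H : Type*} [NormedAddCommGroup H] [InnerProductSpace ℝ H]
    {C : Set H} (hC : Convex ℝ C) {L : H → ℝ} {γ : ℝ} (hγ : 0 ≤ γ)
    (hL : ∀ x ∈ C, ∀ z ∈ C, ∀ t ∈ Set.Icc (0:ℝ) 1,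
      L (t • x + (1 - t) • z) ≤ t * L x + (1 - t) * L z - γ / 2 * (t * (1 - t)) * ‖x - z‖ ^ 2)
    {w xs : H} (hxs : xs ∈ C)
    (hmin : ∀ x ∈ C, ‖w - xs‖ ^ 2 + L xs ≤ ‖w - x‖ ^ 2 + L x)
    {x : H} (hx : x ∈ C) :
    ‖w - xs‖ ^ 2 + L xs + (1 + γ / 2) * ‖x - xs‖ ^ 2 ≤ ‖w - x‖ ^ 2 + L x := by
  have key : ∀ t : ℝ, 0 < t → t ≤ 1 →
      (1 + γ / 2) * (1 - t) * ‖x - xs‖ ^ 2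
        ≤ (‖w - x‖ ^ 2 + L x) - (‖w - xs‖ ^ 2 + L xs) := by
    intro t ht0 ht1
    have htm : t ∈ Set.Icc (0:ℝ) 1 := ⟨le_of_lt ht0, ht1⟩
    have hxt : t • x + (1 - t) • xs ∈ C :=
      hC hx hxs (le_of_lt ht0) (by linarith) (by ring)
    have hmin' := hmin _ hxt
    have hLt := hL x hx xs hxs t htm
    have heq : w - (t • x + (1 - t) • xs) = t • (w - x) + (1 - t) • (w - xs) := by
      module
    have hq : ‖w - (t • x + (1 - t) • xs)‖ ^ 2
        = t * ‖w - x‖ ^ 2 + (1 - t) * ‖w - xs‖ ^ 2 - t * (1 - t) * ‖x - xs‖ ^ 2 := by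
      rw [heq, norm_combo t (1 - t) (by ring)]
      have : (w - x) - (w - xs) = xs - x := by abel
      rw [this, norm_sub_rev xs x]
    have step : t * ((1 + γ / 2) * (1 - t) * ‖x - xs‖ ^ 2)
        ≤ t * ((‖w - x‖ ^ 2 + L x) - (‖w - xs‖ ^ 2 + L xs)) := by nlinarith [hmin', hLt, hq]
    exact le_of_mul_le_mul_left step ht0
  have hseq : Tendsto (fun n : ℕ => (1 + γ / 2) * (1 - 1 / (n + 1)) * ‖x - xs‖ ^ 2) atTop
      (nhds ((1 + γ / 2) * (1 - 0) * ‖x - xs‖ ^ 2)) := by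
    exact (((tendsto_const_nhds.sub
      tendsto_one_div_add_atTop_nhds_zero_nat).const_mul _).mul_const _)
  have hle := le_of_tendsto hseq (Filter.Eventually.of_forall (fun n : ℕ => by
    refine key (1 / (n + 1)) (by positivity) ?_
    rw [div_le_one (by positivity)]
    linarith [Nat.cast_nonneg (α := ℝ) n]))
  simp only [sub_zero, mul_one] at hle
  linarith

lemma contract {H : Type*} [NormedAddCommGroup H] [InnerProductSpace ℝ H]
    {C : Set H} (hC : Convex ℝ C) {L : H → ℝ} {γ θ' : ℝ}
    (hγ : 0 ≤ γ) (hθ' : 0 ≤ θ')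
    (hL : ∀ x ∈ C, ∀ z ∈ C, ∀ t ∈ Set.Icc (0:ℝ) 1,
      L (t • x + (1 - t) • z) ≤ t * L x + (1 - t) * L z - γ / 2 * (t * (1 - t)) * ‖x - z‖ ^ 2)
    {w1 w2 u us : H} (hu : u ∈ C) (hus : us ∈ C)
    (h1 : ∀ v ∈ C, ‖w1 - u‖ ^ 2 + L u ≤ ‖w1 - v‖ ^ 2 + L v)
    (h2 : ∀ v ∈ C, ‖w2 - us‖ ^ 2 + L us ≤ ‖w2 - v‖ ^ 2 + L v)
    (hinner : ⟪w2 - w1, us - u⟫ ≤ θ' * (‖w2 - w1‖ * ‖us - u‖)) :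
    ‖u - us‖ ≤ 2 * θ' / (2 + γ) * ‖w2 - w1‖ := by
  have A := strong_min hC hγ hL hu h1 hus
  have B := strong_min hC hγ hL hus h2 hu
  have hcr := cross_id w1 w2 u us
  have husu : ‖us - u‖ = ‖u - us‖ := norm_sub_rev _ _
  rw [husu] at A hinner
  have key : (2 + γ) * ‖u - us‖ ^ 2 ≤ 2 * θ' * (‖w2 - w1‖ * ‖u - us‖) := by linarith
  rcases eq_or_lt_of_le (norm_nonneg (u - us)) with h0 | h0
  · rw [← h0]; positivity
  · rw [div_mul_eq_mul_div, le_div_iff₀ (by linarith : (0:ℝ) < 2 + γ)]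
    nlinarith [key, h0]

/-- Paper's Corollary 3: convergence of the alternating-minimization algorithm
if either the classes are `θ`-separable or one of the penalties is strongly convex. -/
theorem altMin_convergence
    {H : Type*} [NormedAddCommGroup H] [InnerProductSpace ℝ H]
    (F G : Set H) (hF : Convex ℝ F) (hG : Convex ℝ G)
    (y : H) (Lf Lg : H → ℝ)
    (hLf : ConvexOn ℝ F Lf) (hLg : ConvexOn ℝ G Lg)
    (hsep_or_sc :
      (∃ θ : ℝ, 0 ≤ θ ∧ θ < 1 ∧ ∀ f₁ ∈ F, ∀ f₂ ∈ F, ∀ g₁ ∈ G, ∀ g₂ ∈ G,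
        |(⟪f₁ - f₂, g₁ - g₂⟫)| ≤ θ * (‖f₁ - f₂‖ * ‖g₁ - g₂‖))
      ∨ (∃ γ : ℝ, 0 < γ ∧
          ((∀ x ∈ F, ∀ z ∈ F, ∀ t ∈ Set.Icc (0:ℝ) 1,
      Lf (t • x + (1 - t) • z) ≤ t * Lf x + (1 - t) * Lf z - γ / 2 * (t * (1 - t)) * ‖x - z‖ ^ 2)
          ∨ (∀ x ∈ G, ∀ z ∈ G, ∀ t ∈ Set.Icc (0:ℝ) 1,
      Lg (t • x + (1 - t) • z) ≤ t * Lg x + (1 - t) * Lg z - γ / 2 * (t * (1 - t)) * ‖x - z‖ ^ 2))))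
    (fhat ghat : H) (hfhatF : fhat ∈ F) (hghatG : ghat ∈ G)
    (hmin : ∀ f ∈ F, ∀ g ∈ G,
      ‖y - fhat - ghat‖ ^ 2 + Lf fhat + Lg ghat ≤ ‖y - f - g‖ ^ 2 + Lf f + Lg g)
    (f g : ℕ → H) (hf0 : f 0 ∈ F)
    (hfF : ∀ m, 1 ≤ m → f m ∈ F) (hgG : ∀ m, 1 ≤ m → g m ∈ G)
    (hgstep : ∀ m, 1 ≤ m → ∀ g' ∈ G,
      ‖y - f (m - 1) - g m‖ ^ 2 + Lg (g m) ≤ ‖y - f (m - 1) - g'‖ ^ 2 + Lg g')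
    (hfstep : ∀ m, 1 ≤ m → ∀ f' ∈ F,
      ‖y - f m - g m‖ ^ 2 + Lf (f m) ≤ ‖y - f' - g m‖ ^ 2 + Lf f') :
    Tendsto (fun m => ‖f m - fhat‖ + ‖g m - ghat‖) atTop (nhds 0)
    ∧ Tendsto (fun m => Lf (f m)) atTop (nhds (Lf fhat))
    ∧ Tendsto (fun m => Lg (g m)) atTop (nhds (Lg ghat)) := by
  have hFmem : ∀ k, f k ∈ F := fun k => by
    cases k with
    | zero => exact hf0
    | succ n => exact hfF _ (Nat.succ_le_succ (Nat.zero_le _))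
  have hghat_min : ∀ v ∈ G, ‖y - fhat - ghat‖ ^ 2 + Lg ghat ≤ ‖y - fhat - v‖ ^ 2 + Lg v := by
    intro v hv; have := hmin fhat hfhatF v hv; linarith
  have hfhat_min : ∀ v ∈ F, ‖y - ghat - fhat‖ ^ 2 + Lf fhat ≤ ‖y - ghat - v‖ ^ 2 + Lf v := by
    intro v hv
    have := hmin v hv ghat hghatG
    rw [sub_right_comm y fhat ghat, sub_right_comm y v ghat] at this
    linarith
  have rates : ∀ θ' γf γg : ℝ, 0 ≤ θ' → 0 ≤ γf → 0 ≤ γg →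
      (∀ x ∈ F, ∀ z ∈ F, ∀ t ∈ Set.Icc (0:ℝ) 1,
        Lf (t • x + (1 - t) • z) ≤ t * Lf x + (1 - t) * Lf z - γf / 2 * (t * (1 - t)) * ‖x - z‖ ^ 2) →
      (∀ x ∈ G, ∀ z ∈ G, ∀ t ∈ Set.Icc (0:ℝ) 1,
        Lg (t • x + (1 - t) • z) ≤ t * Lg x + (1 - t) * Lg z - γg / 2 * (t * (1 - t)) * ‖x - z‖ ^ 2) →
      (∀ f₁ ∈ F, ∀ f₂ ∈ F, ∀ g₁ ∈ G, ∀ g₂ ∈ G,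
        |(⟪f₁ - f₂, g₁ - g₂⟫)| ≤ θ' * (‖f₁ - f₂‖ * ‖g₁ - g₂‖)) →
      (∀ m, 1 ≤ m → ‖g m - ghat‖ ≤ 2 * θ' / (2 + γg) * ‖f (m - 1) - fhat‖) ∧
      (∀ m, 1 ≤ m → ‖f m - fhat‖ ≤ 2 * θ' / (2 + γf) * ‖g m - ghat‖) := by
    intro θ' γf γg hθ' hγf hγg hPf hPg hsep
    constructor
    · intro m hm
      have hin : ⟪(y - fhat) - (y - f (m - 1)), ghat - g m⟫
          ≤ θ' * (‖(y - fhat) - (y - f (m - 1))‖ * ‖ghat - g m‖) := by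
        have e : (y - fhat) - (y - f (m - 1)) = f (m - 1) - fhat := by abel
        rw [e]
        exact le_trans (le_abs_self _) (hsep _ (hFmem _) _ hfhatF _ hghatG _ (hgG m hm))
      have key := contract hG hγg hθ' hPg (hgG m hm) hghatG (hgstep m hm) hghat_min hin
      have e : (y - fhat) - (y - f (m - 1)) = f (m - 1) - fhat := by abel
      rwa [e] at key
    · intro m hm
      have h1 : ∀ v ∈ F, ‖(y - g m) - f m‖ ^ 2 + Lf (f m) ≤ ‖(y - g m) - v‖ ^ 2 + Lf v := by
        intro v hv
        have := hfstep m hm v hv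
        rwa [sub_right_comm y (f m) (g m), sub_right_comm y v (g m)] at this
      have hin : ⟪(y - ghat) - (y - g m), fhat - f m⟫
          ≤ θ' * (‖(y - ghat) - (y - g m)‖ * ‖fhat - f m‖) := by
        have e : (y - ghat) - (y - g m) = g m - ghat := by abel
        rw [e, real_inner_comm]
        refine le_trans (le_abs_self _) ?_
        calc |(⟪fhat - f m, g m - ghat⟫)|
            ≤ θ' * (‖fhat - f m‖ * ‖g m - ghat‖) :=
              hsep _ hfhatF _ (hfF m hm) _ (hgG m hm) _ hghatG
          _ = θ' * (‖g m - ghat‖ * ‖fhat - f m‖) := by ring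
      have key := contract hF hγf hθ' hPf (hfF m hm) hfhatF h1 hfhat_min hin
      have e : (y - ghat) - (y - g m) = g m - ghat := by abel
      rwa [e] at key
  have hPf0 : ∀ x ∈ F, ∀ z ∈ F, ∀ t ∈ Set.Icc (0:ℝ) 1,
      Lf (t • x + (1 - t) • z) ≤ t * Lf x + (1 - t) * Lf z - (0:ℝ) / 2 * (t * (1 - t)) * ‖x - z‖ ^ 2 := by
    intro x hx z hz t ht
    have := hLf.2 hx hz ht.1 (by linarith [ht.2] : (0:ℝ) ≤ 1 - t) (by ring)
    simpa using this
  have hPg0 : ∀ x ∈ G, ∀ z ∈ G, ∀ t ∈ Set.Icc (0:ℝ) 1,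
      Lg (t • x + (1 - t) • z) ≤ t * Lg x + (1 - t) * Lg z - (0:ℝ) / 2 * (t * (1 - t)) * ‖x - z‖ ^ 2 := by
    intro x hx z hz t ht
    have := hLg.2 hx hz ht.1 (by linarith [ht.2] : (0:ℝ) ≤ 1 - t) (by ring)
    simpa using this
  have hCS : ∀ f₁ ∈ F, ∀ f₂ ∈ F, ∀ g₁ ∈ G, ∀ g₂ ∈ G,
      |(⟪f₁ - f₂, g₁ - g₂⟫)| ≤ 1 * (‖f₁ - f₂‖ * ‖g₁ - g₂‖) := by
    intro f₁ _ f₂ _ g₁ _ g₂ _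
    rw [one_mul]
    exact abs_real_inner_le_norm _ _
  obtain ⟨a, b, ha, hb, hab, hga, hfb⟩ : ∃ a b : ℝ, 0 ≤ a ∧ 0 ≤ b ∧ a * b < 1 ∧
      (∀ m, 1 ≤ m → ‖g m - ghat‖ ≤ a * ‖f (m - 1) - fhat‖) ∧
      (∀ m, 1 ≤ m → ‖f m - fhat‖ ≤ b * ‖g m - ghat‖) := by
    rcases hsep_or_sc with ⟨θ, hθ0, hθ1, hsep⟩ | ⟨γ, hγ, hsc | hsc⟩
    · obtain ⟨r1, r2⟩ := rates θ 0 0 hθ0 le_rfl le_rfl hPf0 hPg0 hsep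
      refine ⟨2 * θ / (2 + 0), 2 * θ / (2 + 0), by positivity, by positivity, ?_, r1, r2⟩
      have e : 2 * θ / (2 + 0) = θ := by norm_num
      rw [e]; nlinarith
    · obtain ⟨r1, r2⟩ := rates 1 γ 0 zero_le_one (le_of_lt hγ) le_rfl hsc hPg0 hCS
      refine ⟨2 * 1 / (2 + 0), 2 * 1 / (2 + γ), by positivity, by positivity, ?_, r1, r2⟩
      have e : 2 * 1 / (2 + 0) = (1:ℝ) := by norm_num
      rw [e, one_mul, div_lt_one (by linarith)]
      linarith
    · obtain ⟨r1, r2⟩ := rates 1 0 γ zero_le_one le_rfl (le_of_lt hγ) hPf0 hsc hCS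
      refine ⟨2 * 1 / (2 + γ), 2 * 1 / (2 + 0), by positivity, by positivity, ?_, r1, r2⟩
      have e : 2 * 1 / (2 + 0) = (1:ℝ) := by norm_num
      rw [e, mul_one, div_lt_one (by linarith)]
      linarith
  have hfb0 : ∀ m : ℕ, ‖f m - fhat‖ ≤ (a * b) ^ m * ‖f 0 - fhat‖ := by
    intro m
    induction m with
    | zero => simp
    | succ n ih =>
      have h1 := hfb (n + 1) (Nat.le_add_left 1 n)
      have h2 := hga (n + 1) (Nat.le_add_left 1 n)
      simp only [Nat.add_sub_cancel] at h2
      calc ‖f (n + 1) - fhat‖ ≤ b * ‖g (n + 1) - ghat‖ := h1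
        _ ≤ b * (a * ‖f n - fhat‖) := mul_le_mul_of_nonneg_left h2 hb
        _ ≤ b * (a * ((a * b) ^ n * ‖f 0 - fhat‖)) :=
            mul_le_mul_of_nonneg_left (mul_le_mul_of_nonneg_left ih ha) hb
        _ = (a * b) ^ (n + 1) * ‖f 0 - fhat‖ := by ring
  have habnn : 0 ≤ a * b := mul_nonneg ha hb
  have hfT0 : Tendsto (fun m => ‖f m - fhat‖) atTop (nhds 0) := by
    apply squeeze_zero (fun m => norm_nonneg _) hfb0
    have := (tendsto_pow_atTop_nhds_zero_of_lt_one habnn hab).mul_const ‖f 0 - fhat‖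
    simpa using this
  have hfprevT : Tendsto (fun m : ℕ => ‖f (m - 1) - fhat‖) atTop (nhds 0) :=
    hfT0.comp (tendsto_sub_atTop_nat 1)
  have hgT0 : Tendsto (fun m => ‖g m - ghat‖) atTop (nhds 0) := by
    apply squeeze_zero' (Eventually.of_forall fun m => norm_nonneg _)
      (eventually_atTop.2 ⟨1, fun m hm => hga m hm⟩)
    simpa using hfprevT.const_mul a
  have hfT : Tendsto f atTop (nhds fhat) := tendsto_iff_norm_sub_tendsto_zero.mpr hfT0
  have hgT : Tendsto g atTop (nhds ghat) := tendsto_iff_norm_sub_tendsto_zero.mpr hgT0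
  have hfprev : Tendsto (fun m : ℕ => f (m - 1)) atTop (nhds fhat) :=
    hfT.comp (tendsto_sub_atTop_nat 1)
  have T1 : Tendsto (fun m => ‖y - fhat - g m‖ ^ 2) atTop (nhds (‖y - fhat - ghat‖ ^ 2)) :=
    (hgT.const_sub (y - fhat)).norm.pow 2
  have T2 : Tendsto (fun m : ℕ => ‖y - f (m - 1) - ghat‖ ^ 2) atTop
      (nhds (‖y - fhat - ghat‖ ^ 2)) :=
    ((hfprev.const_sub y).sub_const ghat).norm.pow 2
  have T3 : Tendsto (fun m : ℕ => ‖y - f (m - 1) - g m‖ ^ 2) atTop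
      (nhds (‖y - fhat - ghat‖ ^ 2)) :=
    ((hfprev.const_sub y).sub hgT).norm.pow 2
  have T4 : Tendsto (fun m => ‖y - f m - ghat‖ ^ 2) atTop (nhds (‖y - fhat - ghat‖ ^ 2)) :=
    ((hfT.const_sub y).sub_const ghat).norm.pow 2
  have T5 : Tendsto (fun m => ‖y - f m - g m‖ ^ 2) atTop (nhds (‖y - fhat - ghat‖ ^ 2)) :=
    ((hfT.const_sub y).sub hgT).norm.pow 2
  refine ⟨by simpa using hfT0.add hgT0, ?_, ?_⟩
  · refine tendsto_of_tendsto_of_tendsto_of_le_of_le'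
      (g := fun m => Lf fhat + (‖y - fhat - ghat‖ ^ 2 - ‖y - f m - ghat‖ ^ 2))
      (h := fun m => Lf fhat + (‖y - fhat - g m‖ ^ 2 - ‖y - f m - g m‖ ^ 2))
      ?_ ?_ ?_ ?_
    · have h := (tendsto_const_nhds (x := Lf fhat)).add
        ((tendsto_const_nhds (x := ‖y - fhat - ghat‖ ^ 2)).sub T4)
      rw [show Lf fhat + (‖y - fhat - ghat‖ ^ 2 - ‖y - fhat - ghat‖ ^ 2) = Lf fhat by ring] at h
      exact h
    · have h := (tendsto_const_nhds (x := Lf fhat)).add (T1.sub T5)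
      rw [show Lf fhat + (‖y - fhat - ghat‖ ^ 2 - ‖y - fhat - ghat‖ ^ 2) = Lf fhat by ring] at h
      exact h
    · refine eventually_atTop.2 ⟨1, fun m hm => ?_⟩
      have := hmin (f m) (hfF m hm) ghat hghatG
      linarith
    · refine eventually_atTop.2 ⟨1, fun m hm => ?_⟩
      have := hfstep m hm fhat hfhatF
      linarith
  · refine tendsto_of_tendsto_of_tendsto_of_le_of_le'
      (g := fun m => Lg ghat + (‖y - fhat - ghat‖ ^ 2 - ‖y - fhat - g m‖ ^ 2))
      (h := fun m : ℕ => Lg ghat + (‖y - f (m - 1) - ghat‖ ^ 2 - ‖y - f (m - 1) - g m‖ ^ 2))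
      ?_ ?_ ?_ ?_
    · have h := (tendsto_const_nhds (x := Lg ghat)).add
        ((tendsto_const_nhds (x := ‖y - fhat - ghat‖ ^ 2)).sub T1)
      rw [show Lg ghat + (‖y - fhat - ghat‖ ^ 2 - ‖y - fhat - ghat‖ ^ 2) = Lg ghat by ring] at h
      exact h
    · have h := (tendsto_const_nhds (x := Lg ghat)).add (T2.sub T3)
      rw [show Lg ghat + (‖y - fhat - ghat‖ ^ 2 - ‖y - fhat - ghat‖ ^ 2) = Lg ghat by ring] at h
      exact h
    · refine eventually_atTop.2 ⟨1, fun m hm => ?_⟩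
      have := hmin fhat hfhatF (g m) (hgG m hm)
      linarith
    · refine eventually_atTop.2 ⟨1, fun m hm => ?_⟩
      have := hgstep m hm ghat hghatG
      linarith
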